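/- Let Y ∈ C_X^q with Gubinelli derivative Y'_t antisymmetric for all t ∈ [0,T], X ∈ V^p([0,T], R^d), with 2/p + 1/q > 1. Then for every γ ∈ [0,1] the symmetric part S_γ⟨X,Y⟩ := lim_{|π|→0} Σ_{[s,t]∈π} (⟨Y_s + γ(Y_t−Y_s), X_t−X_s⟩ + ⟨X_s + γ(X_t−X_s), Y_t−Y_s⟩) exists. -/

import Mathlib

open Finset Filter Topology

/-- A partition of `[a,b]` given by finitely many monotone grid points. -/
structure GridPartition (a b : ℝ) where
  n : ℕ
  t : Fin (n + 1) → ℝ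
  mono : Monotone t
  first : t 0 = a
  last : t (Fin.last n) = b

namespace GridPartition

variable {a b : ℝ}

/-- The mesh of a partition: the largest interval length. -/
noncomputable def mesh (π : GridPartition a b) : ℝ :=
  ⨆ i : Fin π.n, (π.t i.succ - π.t i.castSucc)

/-- The Riemann-type sum `∑_{[s,t] ∈ π} F s t` over the intervals of a partition. -/
def rsum {E : Type*} [AddCommMonoid E] (π : GridPartition a b) (F : ℝ → ℝ → E) : E :=
  ∑ i : Fin π.n, F (π.t i.castSucc) (π.t i.succ)

end GridPartition

/-- `RiemannLimit a b F L`: the Riemann-type sums of `F` over partitions of `[a,b]`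
converge to `L` as the mesh tends to `0`. -/
def RiemannLimit {E : Type*} [SeminormedAddCommGroup E] (a b : ℝ) (F : ℝ → ℝ → E)
    (L : E) : Prop :=
  ∀ ε > 0, ∃ δ > 0, ∀ π : GridPartition a b, π.mesh < δ → ‖π.rsum F - L‖ < ε

/-- `X` has finite `p`-variation on `[a,b]` (boundedness of the partition sums). -/
def FinitePVar {E : Type*} [SeminormedAddCommGroup E] (p a b : ℝ) (X : ℝ → E) : Prop :=
  ∃ M : ℝ, ∀ π : GridPartition a b,
    (∑ i : Fin π.n, ‖X (π.t i.succ) - X (π.t i.castSucc)‖ ^ p) ≤ M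

/-- `X ∈ 𝒱^p([a,b])`: continuous and of finite `p`-variation. -/
def MemVp {E : Type*} [SeminormedAddCommGroup E] (p a b : ℝ) (X : ℝ → E) : Prop :=
  ContinuousOn X (Set.Icc a b) ∧ FinitePVar p a b X

/-- Finite `r`-variation for a two-parameter (remainder) function. -/
def FiniteRVar2 {E : Type*} [SeminormedAddCommGroup E] (r a b : ℝ) (R : ℝ → ℝ → E) : Prop :=
  ∃ M : ℝ, ∀ π : GridPartition a b,
    (∑ i : Fin π.n, ‖R (π.t i.castSucc) (π.t i.succ)‖ ^ r) ≤ M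

/-- Euclidean inner product on `Fin d → ℝ`. -/
def dot {d : ℕ} (x y : Fin d → ℝ) : ℝ := ∑ i, x i * y i

/-- Matrix-vector multiplication. -/
def mulVec' {d : ℕ} (M : Fin d → Fin d → ℝ) (v : Fin d → ℝ) : Fin d → ℝ :=
  fun i => ∑ j, M i j * v j

/-- `Y` is controlled by `X` with Gubinelli derivative `Y'` (vector case). -/
def Controlled {d : ℕ} (q r a b : ℝ) (X Y : ℝ → Fin d → ℝ)
    (Y' : ℝ → Fin d → Fin d → ℝ) : Prop :=
  MemVp q a b Y' ∧
    FiniteRVar2 r a b (fun s t => Y t - Y s - mulVec' (Y' s) (X t - X s))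

/-- `Y` is controlled by `X` with Gubinelli derivative `Y'` (scalar case). -/
def Controlled1 (q r a b : ℝ) (X Y Y' : ℝ → ℝ) : Prop :=
  MemVp q a b Y' ∧
    FiniteRVar2 r a b (fun s t => Y t - Y s - Y' s * (X t - X s))

/-- A control function on the simplex `Δ_T`. -/
def IsControlFun (T : ℝ) (ω : ℝ → ℝ → ℝ) : Prop :=
  ContinuousOn (fun z : ℝ × ℝ => ω z.1 z.2)
      {z : ℝ × ℝ | 0 ≤ z.1 ∧ z.1 ≤ z.2 ∧ z.2 ≤ T} ∧
    (∀ s ∈ Set.Icc (0 : ℝ) T, ω s s = 0) ∧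
    (∀ s t : ℝ, 0 ≤ s → s ≤ t → t ≤ T → 0 ≤ ω s t) ∧
    (∀ s u t : ℝ, 0 ≤ s → s ≤ u → u ≤ t → t ≤ T → ω s u + ω u t ≤ ω s t)

/-- An increasing (refining) sequence of partitions with mesh tending to zero. -/
def IncreasingSeq {T : ℝ} (π : ℕ → GridPartition 0 T) : Prop :=
  (∀ n, Set.range (π n).t ⊆ Set.range (π (n + 1)).t) ∧
    Tendsto (fun n => (π n).mesh) atTop (𝓝 0)

/-- `f` has quadratic variation `Q` along the partition sequence `π` in the sense
of Föllmer. -/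
def HasQV {T : ℝ} (π : ℕ → GridPartition 0 T) (f : ℝ → ℝ) (Q : ℝ → ℝ) : Prop :=
  ContinuousOn Q (Set.Icc 0 T) ∧
    ∀ u ∈ Set.Icc (0 : ℝ) T,
      Tendsto (fun n => ∑ i : Fin (π n).n,
          (f (min ((π n).t i.succ) u) - f (min ((π n).t i.castSucc) u)) ^ 2)
        atTop (𝓝 (Q u))

/-!
By antisymmetry of `Y'_s`, `⟨δX, Y'_s δX⟩ = 0`, so each summand equals the increment of
`⟨X, Y⟩` over `[s, t]` plus `(2γ - 1) ⟨δX, R_{s,t}⟩`, where `R` is the controlled remainder.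
The increments telescope to `⟨X_T, Y_T⟩ - ⟨X_0, Y_0⟩`. For the remainder terms put
`ρ⁻¹ = p⁻¹ + r⁻¹ = 2/p + 1/q > 1`; Hölder with the triple `(p, r, ρ)` bounds
`∑ |δX| |R|` by `(max |δX|) ^ (1 - ρ)` times powers of the `p`-variation of `X` and the
`r`-variation of `R`, and `max |δX| → 0` with the mesh by uniform continuity of `X`.
-/

lemma Fin.sum_sub_castSucc_eq {M : Type*} [AddCommGroup M] :
    ∀ {n : ℕ} (g : Fin (n + 1) → M), ∑ i : Fin n, (g i.succ - g i.castSucc) = g (Fin.last n) - g 0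
  | 0, g => by simp
  | n + 1, g => by
    rw [Fin.sum_univ_castSucc]
    simp only [Fin.succ_castSucc]
    rw [Fin.sum_sub_castSucc_eq (fun j => g j.castSucc)]
    simp only [Fin.succ_last, Fin.castSucc_zero]
    abel

lemma Real.le_rpow_one_sub_mul_rpow_of_le {x M ρ : ℝ} (hx : 0 ≤ x) (hxM : x ≤ M) (hρ : ρ ≤ 1) :
    x ≤ M ^ (1 - ρ) * x ^ ρ :=
  calc x = x ^ (1 - ρ) * x ^ ρ := by
        rw [← Real.rpow_add' hx (by simp), sub_add_cancel, Real.rpow_one]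
    _ ≤ M ^ (1 - ρ) * x ^ ρ := by gcongr

lemma Real.sum_mul_le_rpow_mul_Lp_mul_Lq {ι : Type*} (s : Finset ι) {a b : ι → ℝ}
    {p q r η : ℝ} (hpqr : p.HolderTriple q r) (hr : r ≤ 1) (ha : ∀ i ∈ s, 0 ≤ a i)
    (hb : ∀ i ∈ s, 0 ≤ b i) (hη : 0 ≤ η) (haη : ∀ i ∈ s, a i ≤ η) :
    ∑ i ∈ s, a i * b i ≤
      η ^ (1 - r) * (∑ i ∈ s, a i ^ p) ^ (r / p) * (∑ i ∈ s, b i ^ q) ^ (1 / q) := by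
  set B := ∑ i ∈ s, b i ^ q
  have hq := hpqr.symm.pos
  have hB : 0 ≤ B := Finset.sum_nonneg fun i hi => Real.rpow_nonneg (hb i hi) q
  have hbB : ∀ i ∈ s, b i ≤ B ^ (1 / q) := fun i hi =>
    calc b i = (b i ^ q) ^ (1 / q) := by rw [one_div, Real.rpow_rpow_inv (hb i hi) hq.ne']
      _ ≤ B ^ (1 / q) := Real.rpow_le_rpow (Real.rpow_nonneg (hb i hi) q)
          (Finset.single_le_sum (fun j hj => Real.rpow_nonneg (hb j hj) q) hi) (by positivity)
  calc ∑ i ∈ s, a i * b i ≤ ∑ i ∈ s, (η * B ^ (1 / q)) ^ (1 - r) * (a i * b i) ^ r :=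
        Finset.sum_le_sum fun i hi => Real.le_rpow_one_sub_mul_rpow_of_le
          (mul_nonneg (ha i hi) (hb i hi)) (mul_le_mul (haη i hi) (hbB i hi) (hb i hi) hη) hr
    _ = (η * B ^ (1 / q)) ^ (1 - r) * ∑ i ∈ s, (a i * b i) ^ r := by rw [Finset.mul_sum]
    _ ≤ (η * B ^ (1 / q)) ^ (1 - r) * ((∑ i ∈ s, a i ^ p) ^ (r / p) * B ^ (r / q)) := by
        gcongr
        exact Real.Lr_rpow_le_Lp_mul_Lq_of_nonneg s hpqr ha hb
    _ = η ^ (1 - r) * (∑ i ∈ s, a i ^ p) ^ (r / p) * B ^ (1 / q) := by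
        rw [Real.mul_rpow hη (by positivity), ← Real.rpow_mul hB, mul_mul_mul_comm,
          ← Real.rpow_add' hB (by ring_nf; exact inv_ne_zero hq.ne')]
        ring_nf

namespace GridPartition

variable {a b : ℝ} (π : GridPartition a b)

lemma mem_Icc (i : Fin (π.n + 1)) : π.t i ∈ Set.Icc a b :=
  ⟨π.first.symm.trans_le (π.mono (Fin.zero_le i)), (π.mono (Fin.le_last i)).trans_eq π.last⟩

lemma sub_le_mesh (i : Fin π.n) : π.t i.succ - π.t i.castSucc ≤ π.mesh :=
  le_ciSup (f := fun i : Fin π.n => π.t i.succ - π.t i.castSucc) (Set.finite_range _).bddAbove i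

lemma rsum_sub {M : Type*} [AddCommGroup M] (f : ℝ → M) :
    π.rsum (fun s t => f t - f s) = f b - f a := by
  rw [rsum, Fin.sum_sub_castSucc_eq (fun j => f (π.t j)), π.first, π.last]

end GridPartition

lemma ContinuousOn.exists_forall_mesh_lt_norm_sub_lt {E : Type*} [SeminormedAddCommGroup E]
    {a b η : ℝ} {X : ℝ → E} (hX : ContinuousOn X (Set.Icc a b)) (hη : 0 < η) :
    ∃ δ > 0, ∀ π : GridPartition a b, π.mesh < δ →
      ∀ i : Fin π.n, ‖X (π.t i.succ) - X (π.t i.castSucc)‖ < η := by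
  obtain ⟨δ, hδ, hX⟩ := Metric.uniformContinuousOn_iff.mp
    (isCompact_Icc.uniformContinuousOn_of_continuous hX) η hη
  refine ⟨δ, hδ, fun π hπ i => ?_⟩
  rw [← dist_eq_norm]
  refine hX _ (π.mem_Icc _) _ (π.mem_Icc _) ?_
  rw [Real.dist_eq, abs_of_nonneg (sub_nonneg.mpr (π.mono (Fin.castSucc_le_succ i)))]
  exact (π.sub_le_mesh i).trans_lt hπ

theorem riemannLimit_zero_of_norm_le_mul {E F V : Type*} [SeminormedAddCommGroup E]
    [SeminormedAddCommGroup F] [SeminormedAddCommGroup V] {p r ρ a b C : ℝ}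
    (hpr : p.HolderTriple r ρ) (hρ : ρ < 1) {X : ℝ → E} {R : ℝ → ℝ → F} {G : ℝ → ℝ → V}
    (hX : MemVp p a b X) (hR : FiniteRVar2 r a b R)
    (hG : ∀ s t, ‖G s t‖ ≤ C * (‖X t - X s‖ * ‖R s t‖)) :
    RiemannLimit a b G 0 := by
  obtain ⟨hXc, MX, hMX⟩ := hX
  obtain ⟨MR, hMR⟩ := hR
  set K := |C| * max MX 0 ^ (ρ / p) * max MR 0 ^ (1 / r)
  have hlim : Tendsto (fun η : ℝ => K * η ^ (1 - ρ)) (𝓝[>] 0) (𝓝 0) := by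
    have := ((Real.continuousAt_rpow_const 0 (1 - ρ) (Or.inr (by linarith))).const_mul K).tendsto
    rw [Real.zero_rpow (by linarith), mul_zero] at this
    exact this.mono_left nhdsWithin_le_nhds
  intro ε hε
  obtain ⟨η, hηε, hη : 0 < η⟩ :=
    ((hlim.eventually (gt_mem_nhds hε)).and self_mem_nhdsWithin).exists
  obtain ⟨δ, hδ, hsmall⟩ := hXc.exists_forall_mesh_lt_norm_sub_lt hη
  refine ⟨δ, hδ, fun π hπ => ?_⟩
  set A : Fin π.n → ℝ := fun i => ‖X (π.t i.succ) - X (π.t i.castSucc)‖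
  set B : Fin π.n → ℝ := fun i => ‖R (π.t i.castSucc) (π.t i.succ)‖
  have hHolder := Real.sum_mul_le_rpow_mul_Lp_mul_Lq Finset.univ hpr hρ.le
    (fun i _ => norm_nonneg _) (fun i _ => norm_nonneg _) hη.le
    (fun i _ => (hsmall π hπ i).le) (a := A) (b := B)
  rw [sub_zero]
  calc ‖π.rsum G‖ ≤ ∑ i, |C| * (A i * B i) :=
        (norm_sum_le _ _).trans (Finset.sum_le_sum fun i _ =>
          (hG _ _).trans (by gcongr; exact le_abs_self C))
    _ = |C| * ∑ i, A i * B i := by rw [Finset.mul_sum]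
    _ ≤ |C| * (η ^ (1 - ρ) * max MX 0 ^ (ρ / p) * max MR 0 ^ (1 / r)) := by
        gcongr
        refine hHolder.trans ?_
        gcongr
        · exact div_nonneg hpr.nonneg' hpr.nonneg
        · exact (hMX π).trans (le_max_left _ _)
        · exact hpr.symm.one_div_nonneg
        · exact (hMR π).trans (le_max_left _ _)
    _ = K * η ^ (1 - ρ) := by ring
    _ < ε := hηε

lemma abs_dot_le {d : ℕ} (u v : Fin d → ℝ) : |dot u v| ≤ d * (‖u‖ * ‖v‖) :=
  calc |dot u v| ≤ ∑ _i : Fin d, ‖u‖ * ‖v‖ :=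
        (Finset.abs_sum_le_sum_abs _ _).trans <| Finset.sum_le_sum fun i _ => by
          rw [abs_mul]
          exact mul_le_mul (by simpa using norm_le_pi_norm u i) (by simpa using norm_le_pi_norm v i)
            (abs_nonneg _) (norm_nonneg _)
    _ = d * (‖u‖ * ‖v‖) := by simp

lemma dot_mulVec'_self_of_antisymm {d : ℕ} {M : Fin d → Fin d → ℝ} (hM : ∀ i j, M i j = -M j i)
    (v : Fin d → ℝ) : dot v (mulVec' M v) = 0 := by
  have hMT : (Matrix.of M).transpose = -Matrix.of M := by
    ext i j
    exact hM j i
  have h : dot v (mulVec' M v) = -dot v (mulVec' M v) := by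
    change dotProduct v ((Matrix.of M).mulVec v) = -dotProduct v ((Matrix.of M).mulVec v)
    conv_lhs => rw [Matrix.dotProduct_mulVec, ← Matrix.mulVec_transpose, hMT, Matrix.neg_mulVec,
      neg_dotProduct, dotProduct_comm]
  linarith

lemma symmetric_summand_eq {d : ℕ} (γ : ℝ) {M : Fin d → Fin d → ℝ}
    (hM : ∀ i j, M i j = -M j i) (x x' y y' : Fin d → ℝ) :
    dot (y + γ • (y' - y)) (x' - x) + dot (x + γ • (x' - x)) (y' - y) =
      (dot x' y' - dot x y) + (2 * γ - 1) * dot (x' - x) (y' - y - mulVec' M (x' - x)) := by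
  have hrem : dot (x' - x) (y' - y - mulVec' M (x' - x)) = dot (x' - x) (y' - y) := by
    have hM0 : dotProduct (x' - x) (mulVec' M (x' - x)) = 0 := dot_mulVec'_self_of_antisymm hM _
    change dotProduct (x' - x) (y' - y - mulVec' M (x' - x)) = dotProduct (x' - x) (y' - y)
    rw [dotProduct_sub, hM0, sub_zero]
  rw [hrem]
  simp only [dot, Finset.mul_sum, ← Finset.sum_sub_distrib, ← Finset.sum_add_distrib]
  refine Finset.sum_congr rfl fun i _ => ?_
  simp only [Pi.add_apply, Pi.sub_apply, Pi.smul_apply, smul_eq_mul]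
  ring

lemma GridPartition.rsum_symmetric_eq {d : ℕ} {a b : ℝ} (π : GridPartition a b) (γ : ℝ)
    (X Y : ℝ → Fin d → ℝ) {Y' : ℝ → Fin d → Fin d → ℝ}
    (hY' : ∀ t ∈ Set.Icc a b, ∀ i j, Y' t i j = -Y' t j i) :
    π.rsum (fun s t => dot (Y s + γ • (Y t - Y s)) (X t - X s) +
        dot (X s + γ • (X t - X s)) (Y t - Y s)) =
      (dot (X b) (Y b) - dot (X a) (Y a)) +
        (2 * γ - 1) *
          π.rsum (fun s t => dot (X t - X s) (Y t - Y s - mulVec' (Y' s) (X t - X s))) := by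
  rw [← π.rsum_sub (fun t => dot (X t) (Y t)), GridPartition.rsum, GridPartition.rsum,
    GridPartition.rsum, Finset.mul_sum, ← Finset.sum_add_distrib]
  exact Finset.sum_congr rfl fun i _ =>
    symmetric_summand_eq γ (hY' _ (π.mem_Icc _)) _ _ _ _

theorem symmetric_part_exists_of_antisym_general {d : ℕ} (T p q r : ℝ)
    (hp : 0 < p) (hq : 0 < q) (hexp : 2 / p + 1 / q > 1) (hr : 1 / r = 1 / p + 1 / q)
    (X Y : ℝ → Fin d → ℝ) (Y' : ℝ → Fin d → Fin d → ℝ)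
    (hX : MemVp p 0 T X)
    (hctrl : Controlled q r 0 T X Y Y')
    (hantisym : ∀ t ∈ Set.Icc (0 : ℝ) T, ∀ i j : Fin d, Y' t i j = -Y' t j i) :
    ∀ γ ∈ Set.Icc (0 : ℝ) 1, ∃ S : ℝ,
      RiemannLimit 0 T
        (fun s t => dot (Y s + γ • (Y t - Y s)) (X t - X s) +
          dot (X s + γ • (X t - X s)) (Y t - Y s)) S := by
  intro γ ⟨hγ0, hγ1⟩
  have hr0 : 0 < r := one_div_pos.mp (hr ▸ by positivity)
  have hρ : (p⁻¹ + r⁻¹)⁻¹ < 1 := by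
    refine inv_lt_one_of_one_lt₀ ?_
    rw [← one_div, ← one_div, hr]
    linarith [show 2 / p = 1 / p + 1 / p by ring]
  have hrem := riemannLimit_zero_of_norm_le_mul (Real.HolderTriple.of_pos hp hr0) hρ hX hctrl.2
    (G := fun s t => dot (X t - X s) (Y t - Y s - mulVec' (Y' s) (X t - X s)))
    (fun s t => abs_dot_le _ _)
  refine ⟨dot (X T) (Y T) - dot (X 0) (Y 0), fun ε hε => ?_⟩
  obtain ⟨δ, hδ, hsmall⟩ := hrem ε hε
  refine ⟨δ, hδ, fun π hπ => ?_⟩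
  rw [π.rsum_symmetric_eq γ X Y hantisym, add_sub_cancel_left, norm_mul]
  have hγ : ‖2 * γ - 1‖ ≤ 1 := abs_le.mpr ⟨by linarith, by linarith⟩
  calc ‖2 * γ - 1‖ * ‖π.rsum _‖ ≤ ‖π.rsum _ - 0‖ := by
        rw [sub_zero]
        exact mul_le_of_le_one_left (norm_nonneg _) hγ
    _ < ε := hsmall π hπ

/-- if `Y` is controlled by `X` with antisymmetric Gubinelli
derivative, the symmetric part `S_γ⟨X,Y⟩` exists for every `γ ∈ [0,1]`. -/
theorem symmetric_part_exists_of_antisym {d : ℕ} (T p q r : ℝ) (hT : 0 < T)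
    (hp : 0 < p) (hq : 0 < q) (hexp : 2 / p + 1 / q > 1) (hr : 1 / r = 1 / p + 1 / q)
    (X Y : ℝ → Fin d → ℝ) (Y' : ℝ → Fin d → Fin d → ℝ)
    (hX : MemVp p 0 T X) (hY : MemVp p 0 T Y)
    (hctrl : Controlled q r 0 T X Y Y')
    (hantisym : ∀ t ∈ Set.Icc (0 : ℝ) T, ∀ i j : Fin d, Y' t i j = -Y' t j i) :
    ∀ γ ∈ Set.Icc (0 : ℝ) 1, ∃ S : ℝ,
      RiemannLimit 0 T
        (fun s t => dot (Y s + γ • (Y t - Y s)) (X t - X s) +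
          dot (X s + γ • (X t - X s)) (Y t - Y s)) S :=
  symmetric_part_exists_of_antisym_general T p q r hp hq hexp hr X Y Y' hX hctrl hantisym
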